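/- Let H = (V, E) be a hypergraph and let S ⊆ E. Then the maximum cardinality of a hyperforest of H contained in S equals min { |V| − |𝒫| + |δ_S(𝒫)| : 𝒫 a partition of V into nonempty parts }. -/
import Mathlib


open Finset

variable {V α : Type*}

/-- `F[X]`: the subfamily of hyperedges of `F` contained in `X`. -/
def restrict [DecidableEq V] (edge : α → Finset V) (F : Finset α) (X : Finset V) : Finset α :=
  F.filter fun e => edge e ⊆ X

/-- `F` is a hyperforest of the hypergraph `(V, E)` (with hyperedges given by `edge`). -/
def IsHyperforest [DecidableEq V] (edge : α → Finset V) (E F : Finset α) : Prop :=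
  F ⊆ E ∧ ∀ X : Finset V, X.Nonempty → (restrict edge F X).card ≤ X.card - 1

/-- `F` is a hypertree: a hyperforest with `|V| - 1` hyperedges. -/
def IsHypertree [Fintype V] [DecidableEq V] (edge : α → Finset V) (E F : Finset α) : Prop :=
  IsHyperforest edge E F ∧ F.card = Fintype.card V - 1

/-- `Ps` is a family of pairwise disjoint nonempty sets whose union is `S`. -/
def IsPartitionOf [DecidableEq V] (Ps : Finset (Finset V)) (S : Finset V) : Prop :=
  (∀ P ∈ Ps, P.Nonempty) ∧ (∀ P ∈ Ps, ∀ Q ∈ Ps, P ≠ Q → Disjoint P Q) ∧ Ps.sup id = S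

/-- `Ps` is a partition of the vertex set `V` into nonempty parts. -/
def IsPartition [Fintype V] [DecidableEq V] (Ps : Finset (Finset V)) : Prop :=
  IsPartitionOf Ps Finset.univ

/-- `δ_F(Ps)`: hyperedges of `F` contained in the union of the members of `Ps`
and intersecting at least two members of `Ps`. -/
def delta [DecidableEq V] (edge : α → Finset V) (F : Finset α) (Ps : Finset (Finset V)) :
    Finset α :=
  F.filter fun e => edge e ⊆ Ps.sup id ∧
    2 ≤ (Ps.filter fun P => (edge e ∩ P).Nonempty).card

section Aux

variable [DecidableEq V] [DecidableEq α]

/-- A tight set for `F`: a nonempty set `X` with `|F[X]| = |X| - 1`. -/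
def Tight (edge : α → Finset V) (F : Finset α) (X : Finset V) : Prop :=
  X.Nonempty ∧ (restrict edge F X).card + 1 = X.card

lemma mem_restrict {edge : α → Finset V} {F : Finset α} {X : Finset V} {e : α} :
    e ∈ restrict edge F X ↔ e ∈ F ∧ edge e ⊆ X := mem_filter

lemma restrict_inter (edge : α → Finset V) (F : Finset α) (X Y : Finset V) :
    restrict edge F (X ∩ Y) = restrict edge F X ∩ restrict edge F Y := by
  ext e; simp only [mem_restrict, mem_inter, Finset.subset_inter_iff]; tauto

lemma forest_bound {edge : α → Finset V} {E F : Finset α} (hF : IsHyperforest edge E F)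
    {X : Finset V} (hX : X.Nonempty) : (restrict edge F X).card + 1 ≤ X.card := by
  have h1 := hF.2 X hX
  have h2 := hX.card_pos
  omega

lemma tight_union {edge : α → Finset V} {E F : Finset α} (hF : IsHyperforest edge E F)
    {X Y : Finset V} (hX : Tight edge F X) (hY : Tight edge F Y)
    (hXY : (X ∩ Y).Nonempty) : Tight edge F (X ∪ Y) := by
  have hU : (X ∪ Y).Nonempty := hX.1.mono subset_union_left
  refine ⟨hU, ?_⟩
  have h1 : (restrict edge F X ∪ restrict edge F Y).card + (restrict edge F X ∩ restrict edge F Y).card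
      = (restrict edge F X).card + (restrict edge F Y).card := card_union_add_card_inter _ _
  have h2 : restrict edge F X ∪ restrict edge F Y ⊆ restrict edge F (X ∪ Y) := by
    intro e he
    simp only [mem_restrict, mem_union] at he ⊢
    rcases he with ⟨h, h'⟩ | ⟨h, h'⟩
    · exact ⟨h, h'.trans subset_union_left⟩
    · exact ⟨h, h'.trans subset_union_right⟩
  have h2' : (restrict edge F X ∪ restrict edge F Y).card ≤ (restrict edge F (X ∪ Y)).card :=
    card_le_card h2
  have h3 := restrict_inter edge F X Y
  have h4 : (restrict edge F (X ∩ Y)).card + 1 ≤ (X ∩ Y).card := forest_bound hF hXY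
  have h5 : (restrict edge F (X ∪ Y)).card + 1 ≤ (X ∪ Y).card := forest_bound hF hU
  have h6 : (X ∪ Y).card + (X ∩ Y).card = X.card + Y.card := card_union_add_card_inter _ _
  have h7 := hX.2
  have h8 := hY.2
  rw [h3] at h4
  omega

instance (edge : α → Finset V) (F : Finset α) (X : Finset V) :
    Decidable (Tight edge F X) := by unfold Tight; infer_instance

lemma tight_singleton {edge : α → Finset V} {F : Finset α}
    (hcard : ∀ e ∈ F, 2 ≤ (edge e).card) (v : V) : Tight edge F {v} := by
  refine ⟨singleton_nonempty v, ?_⟩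
  have : restrict edge F {v} = ∅ := by
    apply filter_eq_empty_iff.mpr
    intro e he hsub
    have h1 := hcard e he
    have h2 : (edge e).card ≤ 1 := (card_le_card hsub).trans (by simp)
    omega
  simp [this]

variable [Fintype V]

lemma tight_sup {edge : α → Finset V} {E F : Finset α} (hF : IsHyperforest edge E F)
    (hcard : ∀ e ∈ F, 2 ≤ (edge e).card) (v : V) (T : Finset (Finset V))
    (hT : ∀ X ∈ T, Tight edge F X ∧ v ∈ X) : Tight edge F (T.sup id ∪ {v}) := by
  induction T using Finset.induction_on with
  | empty => simpa using tight_singleton hcard v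
  | @insert X T hX ih =>
    have hXv := hT X (mem_insert_self X T)
    have hrest : Tight edge F (T.sup id ∪ {v}) := ih fun Y hY => hT Y (mem_insert_of_mem hY)
    have hsup : (insert X T).sup id ∪ {v} = X ∪ (T.sup id ∪ {v}) := by
      rw [Finset.sup_insert]
      simp only [id_eq, Finset.sup_eq_union]
      rw [union_assoc]
    rw [hsup]
    apply tight_union hF hXv.1 hrest
    exact ⟨v, mem_inter.mpr ⟨hXv.2, mem_union_right _ (mem_singleton_self v)⟩⟩

/-- The part of `v`: the union of all tight sets containing `v`, together with `v`. -/
def part (edge : α → Finset V) (F : Finset α) (v : V) : Finset V :=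
  ((Finset.univ : Finset (Finset V)).filter fun X => Tight edge F X ∧ v ∈ X).sup id ∪ {v}

lemma mem_part (edge : α → Finset V) (F : Finset α) (v : V) : v ∈ part edge F v :=
  mem_union_right _ (mem_singleton_self v)

lemma part_tight {edge : α → Finset V} {E F : Finset α} (hF : IsHyperforest edge E F)
    (hcard : ∀ e ∈ F, 2 ≤ (edge e).card) (v : V) : Tight edge F (part edge F v) :=
  tight_sup hF hcard v _ (fun X hX => (mem_filter.mp hX).2)

lemma subset_part {edge : α → Finset V} {F : Finset α} {X : Finset V} {v : V}
    (hX : Tight edge F X) (hv : v ∈ X) : X ⊆ part edge F v := by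
  have h1 : X ∈ (Finset.univ : Finset (Finset V)).filter fun Y => Tight edge F Y ∧ v ∈ Y :=
    mem_filter.mpr ⟨mem_univ X, hX, hv⟩
  exact (Finset.le_sup (f := id) h1 : X ⊆ _).trans subset_union_left

lemma part_eq_of_inter {edge : α → Finset V} {E F : Finset α} (hF : IsHyperforest edge E F)
    (hcard : ∀ e ∈ F, 2 ≤ (edge e).card) {u w : V}
    (h : (part edge F u ∩ part edge F w).Nonempty) : part edge F u = part edge F w := by
  have hU : Tight edge F (part edge F u ∪ part edge F w) :=
    tight_union hF (part_tight hF hcard u) (part_tight hF hcard w) h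
  have h1 : part edge F u ∪ part edge F w ⊆ part edge F u :=
    subset_part hU (mem_union_left _ (mem_part edge F u))
  have h2 : part edge F u ∪ part edge F w ⊆ part edge F w :=
    subset_part hU (mem_union_right _ (mem_part edge F w))
  exact subset_antisymm (subset_union_left.trans h2) (subset_union_right.trans h1)

lemma count_le_one {edge : α → Finset V} {Ps : Finset (Finset V)} (hPs : IsPartition Ps)
    {P : Finset V} (hP : P ∈ Ps) {e : α} (h : edge e ⊆ P) :
    (Ps.filter fun Q => (edge e ∩ Q).Nonempty).card ≤ 1 := by
  apply Finset.card_le_one.mpr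
  intro Q hQ Q' hQ'
  simp only [mem_filter] at hQ hQ'
  have hq : Q = P := by
    by_contra hne
    obtain ⟨x, hx⟩ := hQ.2
    simp only [mem_inter] at hx
    exact Finset.disjoint_left.mp (hPs.2.1 Q hQ.1 P hP hne) hx.2 (h hx.1)
  have hq' : Q' = P := by
    by_contra hne
    obtain ⟨x, hx⟩ := hQ'.2
    simp only [mem_inter] at hx
    exact Finset.disjoint_left.mp (hPs.2.1 Q' hQ'.1 P hP hne) hx.2 (h hx.1)
  rw [hq, hq']

/-- Decomposition: every family with nonempty edges splits along a partition into
the within-part subfamilies and the crossing edges. -/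
lemma card_decomp (edge : α → Finset V) (F : Finset α) {Ps : Finset (Finset V)}
    (hPs : IsPartition Ps) (hne : ∀ e ∈ F, (edge e).Nonempty) :
    F.card = (∑ P ∈ Ps, (restrict edge F P).card) + (delta edge F Ps).card := by
  have hsup : Ps.sup id = Finset.univ := hPs.2.2
  have hdelta : delta edge F Ps
      = F.filter fun e => 2 ≤ (Ps.filter fun P => (edge e ∩ P).Nonempty).card := by
    apply filter_congr
    intro e _
    simp [hsup]
  have hnoncross : (F.filter fun e => ¬ 2 ≤ (Ps.filter fun P => (edge e ∩ P).Nonempty).card)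
      = Ps.biUnion (fun P => restrict edge F P) := by
    ext e
    simp only [mem_filter, mem_biUnion, not_le]
    constructor
    · rintro ⟨heF, hcount⟩
      obtain ⟨x, hx⟩ := hne e heF
      have hxu : x ∈ Ps.sup id := by rw [hsup]; exact mem_univ x
      obtain ⟨P, hP, hxP⟩ := Finset.mem_sup.mp hxu
      have hPnf : P ∈ Ps.filter fun Q => (edge e ∩ Q).Nonempty :=
        mem_filter.mpr ⟨hP, ⟨x, mem_inter.mpr ⟨hx, hxP⟩⟩⟩
      have hone := Finset.card_le_one.mp (by omega : (Ps.filter fun Q => (edge e ∩ Q).Nonempty).card ≤ 1)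
      have hsub : edge e ⊆ P := by
        intro y hy
        have hyu : y ∈ Ps.sup id := by rw [hsup]; exact mem_univ y
        obtain ⟨Q, hQ, hyQ⟩ := Finset.mem_sup.mp hyu
        have hQnf : Q ∈ Ps.filter fun Q => (edge e ∩ Q).Nonempty :=
          mem_filter.mpr ⟨hQ, ⟨y, mem_inter.mpr ⟨hy, hyQ⟩⟩⟩
        rw [← hone Q hQnf P hPnf]; exact hyQ
      exact ⟨P, hP, mem_restrict.mpr ⟨heF, hsub⟩⟩
    · rintro ⟨P, hP, he⟩
      rw [mem_restrict] at he
      refine ⟨he.1, ?_⟩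
      have := count_le_one hPs hP he.2
      omega
  have hdisj : ∀ P ∈ Ps, ∀ Q ∈ Ps, P ≠ Q →
      Disjoint (restrict edge F P) (restrict edge F Q) := by
    intro P hP Q hQ hne'
    rw [Finset.disjoint_left]
    intro e heP heQ
    rw [mem_restrict] at heP heQ
    obtain ⟨x, hx⟩ := hne e heP.1
    exact Finset.disjoint_left.mp (hPs.2.1 P hP Q hQ hne') (heP.2 hx) (heQ.2 hx)
  have hcards := Finset.card_filter_add_card_filter_not
    (s := F) (p := fun e => 2 ≤ (Ps.filter fun P => (edge e ∩ P).Nonempty).card)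
  rw [hnoncross, Finset.card_biUnion hdisj] at hcards
  rw [hdelta]
  omega

lemma sum_parts_card {Ps : Finset (Finset V)} (hPs : IsPartition Ps) :
    ∑ P ∈ Ps, P.card = Fintype.card V := by
  have h1 : (Finset.univ : Finset V) = Ps.biUnion id := by
    rw [← hPs.2.2, Finset.sup_eq_biUnion]
  rw [← Finset.card_univ, h1]
  exact (Finset.card_biUnion hPs.2.1).symm

lemma partition_card_le {Ps : Finset (Finset V)} (hPs : IsPartition Ps) :
    Ps.card ≤ Fintype.card V := by
  rw [← sum_parts_card hPs]
  calc Ps.card = ∑ _P ∈ Ps, 1 := by simp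
  _ ≤ ∑ P ∈ Ps, P.card := Finset.sum_le_sum fun P hP => (hPs.1 P hP).card_pos

/-- Upper bound: any hyperforest contained in `S` has cardinality at most
`|V| - |Ps| + |δ_S(Ps)|` for any partition `Ps`. -/
lemma forest_card_le {edge : α → Finset V} {E F S : Finset α} (hF : IsHyperforest edge E F)
    (hFS : F ⊆ S) (hcard : ∀ e ∈ F, 2 ≤ (edge e).card)
    {Ps : Finset (Finset V)} (hPs : IsPartition Ps) :
    F.card + Ps.card ≤ Fintype.card V + (delta edge S Ps).card := by
  have hne : ∀ e ∈ F, (edge e).Nonempty := fun e he =>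
    Finset.card_pos.mp (by have := hcard e he; omega)
  have hdec := card_decomp edge F hPs hne
  have hsum : (∑ P ∈ Ps, (restrict edge F P).card) + Ps.card ≤ Fintype.card V := by
    rw [← sum_parts_card hPs]
    calc (∑ P ∈ Ps, (restrict edge F P).card) + Ps.card
        = ∑ P ∈ Ps, ((restrict edge F P).card + 1) := by
          rw [Finset.sum_add_distrib]; simp
      _ ≤ ∑ P ∈ Ps, P.card := Finset.sum_le_sum fun P hP => forest_bound hF (hPs.1 P hP)
  have hdsub : delta edge F Ps ⊆ delta edge S Ps := Finset.filter_subset_filter _ hFS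
  have := card_le_card hdsub
  omega

end Aux

/-- the maximum cardinality of a hyperforest contained in `S` (the rank of `S`)
equals `min { |V| - |Ps| + |δ_S(Ps)| : Ps a partition of V into nonempty parts }`. -/
theorem hypergraphic_rank_formula [Fintype V] [DecidableEq V] [DecidableEq α]
    (edge : α → Finset V) (E : Finset α)
    (hV : 1 ≤ Fintype.card V) (hE : ∀ e ∈ E, 2 ≤ (edge e).card)
    (S : Finset α) (hS : S ⊆ E) :
    IsGreatest {n : ℕ | ∃ F : Finset α, F ⊆ S ∧ IsHyperforest edge E F ∧ F.card = n}
      (sInf {m : ℕ | ∃ Ps : Finset (Finset V), IsPartition Ps ∧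
        m = Fintype.card V - Ps.card + (delta edge S Ps).card}) := by
  classical
  -- a maximum hyperforest contained in S
  have hempty : (∅ : Finset α) ∈ S.powerset.filter (fun F => IsHyperforest edge E F) := by
    refine mem_filter.mpr ⟨mem_powerset.mpr (empty_subset S), empty_subset E, ?_⟩
    intro X hX; simp [_root_.restrict]
  obtain ⟨F, hFmem, hFmax⟩ := Finset.exists_max_image
    (S.powerset.filter (fun F => IsHyperforest edge E F)) Finset.card ⟨∅, hempty⟩
  rw [mem_filter, mem_powerset] at hFmem
  obtain ⟨hFS, hF⟩ := hFmem
  have hFcard : ∀ e ∈ F, 2 ≤ (edge e).card := fun e he => hE e (hS (hFS he))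
  -- the canonical partition into maximal tight sets
  set Ps : Finset (Finset V) := Finset.univ.image (part edge F) with hPsdef
  have hPs : IsPartition Ps := by
    refine ⟨?_, ?_, ?_⟩
    · intro P hP
      obtain ⟨v, _, rfl⟩ := mem_image.mp hP
      exact ⟨v, mem_part edge F v⟩
    · intro P hP Q hQ hne
      obtain ⟨u, _, rfl⟩ := mem_image.mp hP
      obtain ⟨w, _, rfl⟩ := mem_image.mp hQ
      by_contra hnd
      obtain ⟨x, hx⟩ := Finset.not_disjoint_iff_nonempty_inter.mp hnd
      exact hne (part_eq_of_inter hF hFcard ⟨x, hx⟩)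
    · apply subset_antisymm
      · exact subset_univ _
      · intro v _
        exact Finset.mem_sup.mpr ⟨part edge F v, mem_image_of_mem _ (mem_univ v), mem_part edge F v⟩
  -- every crossing edge of S is in F
  have hcross : delta edge S Ps = delta edge F Ps := by
    apply subset_antisymm
    · intro e he
      simp only [delta, mem_filter] at he
      obtain ⟨heS, hsub, hcount⟩ := he
      have heF : e ∈ F := by
        by_contra heF
        -- F ∪ {e} is not a hyperforest, so there is a tight set containing edge e
        have hnot : ¬ IsHyperforest edge E (insert e F) := by
          intro hins
          have h1 : insert e F ∈ S.powerset.filter (fun G => IsHyperforest edge E G) :=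
            mem_filter.mpr ⟨mem_powerset.mpr (insert_subset heS hFS), hins⟩
          have h2 := hFmax _ h1
          rw [card_insert_of_notMem heF] at h2
          omega
        rw [IsHyperforest, not_and] at hnot
        have hsubE : insert e F ⊆ E := insert_subset (hS heS) hF.1
        push_neg at hnot
        obtain ⟨X, hXne, hXcard⟩ := hnot hsubE
        by_cases hsubX : edge e ⊆ X
        · -- X is tight
          have hXtight : Tight edge F X := by
            have h3 : restrict edge (insert e F) X = insert e (restrict edge F X) := by
              simp only [_root_.restrict, filter_insert, if_pos hsubX]
            rw [h3] at hXcard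
            have h4 : (insert e (restrict edge F X)).card ≤ (restrict edge F X).card + 1 :=
              card_insert_le _ _
            have h5 := forest_bound hF hXne
            have h6 := hXne.card_pos
            exact ⟨hXne, by omega⟩
          obtain ⟨v, hv⟩ := hXne
          have hXpart : X ⊆ part edge F v := subset_part hXtight hv
          have hPmem : part edge F v ∈ Ps := mem_image_of_mem _ (mem_univ v)
          have := count_le_one hPs hPmem (hsubX.trans hXpart)
          omega
        · have h3 : restrict edge (insert e F) X = restrict edge F X := by
            simp only [_root_.restrict, filter_insert, if_neg hsubX]
          rw [h3] at hXcard
          have h4 := hF.2 X hXne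
          omega
      simp only [delta, mem_filter]
      exact ⟨heF, hsub, hcount⟩
    · exact Finset.filter_subset_filter _ hFS
  -- the key equality for the maximum forest
  have hne : ∀ e ∈ F, (edge e).Nonempty := fun e he =>
    Finset.card_pos.mp (by have := hFcard e he; omega)
  have hdec := card_decomp edge F hPs hne
  have htightsum : (∑ P ∈ Ps, (restrict edge F P).card) + Ps.card = Fintype.card V := by
    rw [← sum_parts_card hPs]
    calc (∑ P ∈ Ps, (restrict edge F P).card) + Ps.card
        = ∑ P ∈ Ps, ((restrict edge F P).card + 1) := by
          rw [Finset.sum_add_distrib]; simp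
      _ = ∑ P ∈ Ps, P.card := Finset.sum_congr rfl (by
          intro P hP
          obtain ⟨v, _, rfl⟩ := mem_image.mp hP
          exact (part_tight hF hFcard v).2)
  have hPsle : Ps.card ≤ Fintype.card V := partition_card_le hPs
  have hkey : F.card = Fintype.card V - Ps.card + (delta edge S Ps).card := by
    rw [hcross]; omega
  -- conclude
  have hmem : (Fintype.card V - Ps.card + (delta edge S Ps).card) ∈
      {m : ℕ | ∃ Ps : Finset (Finset V), IsPartition Ps ∧
        m = Fintype.card V - Ps.card + (delta edge S Ps).card} := ⟨Ps, hPs, rfl⟩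
  have hlb : ∀ m ∈ {m : ℕ | ∃ Ps : Finset (Finset V), IsPartition Ps ∧
      m = Fintype.card V - Ps.card + (delta edge S Ps).card}, F.card ≤ m := by
    rintro m ⟨Qs, hQs, rfl⟩
    have h1 := forest_card_le hF hFS hFcard hQs
    have h2 := partition_card_le hQs
    omega
  have hsinf : sInf {m : ℕ | ∃ Ps : Finset (Finset V), IsPartition Ps ∧
      m = Fintype.card V - Ps.card + (delta edge S Ps).card} = F.card := by
    apply le_antisymm
    · rw [hkey]; exact Nat.sInf_le hmem
    · exact le_csInf ⟨_, hmem⟩ hlb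
  rw [hsinf]
  constructor
  · exact ⟨F, hFS, hF, rfl⟩
  · rintro n ⟨F', hF'S, hF', rfl⟩
    exact hFmax F' (mem_filter.mpr ⟨mem_powerset.mpr hF'S, hF'⟩)
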